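/- A nonempty subset H of a generalized group G is a generalized subgroup of G (i.e., is itself a generalized group under the restricted operation, with identities and inverses as in G) if and only if for all a, b in H, a·b^{-1} ∈ H. -/

import Mathlib

/-- A generalized group: an associative operation where each element has its own
unique two-sided identity `e a` and an inverse relative to it. -/
structure GenGroup (G : Type*) where
  mul : G → G → G
  e : G → G
  inv : G → G
  mul_assoc : ∀ a b c : G, mul (mul a b) c = mul a (mul b c)
  e_mul : ∀ a : G, mul (e a) a = a
  mul_e : ∀ a : G, mul a (e a) = a
  e_unique : ∀ a u : G, mul u a = a → mul a u = a → u = e a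
  mul_inv : ∀ a : G, mul a (inv a) = e a
  inv_mul : ∀ a : G, mul (inv a) a = e a

/-! The substantive point is `e (inv a) = e a`: the identity of `a⁻¹` is a two-sided identity
for `e a`, and by uniqueness it equals `e (e a) = e a`. From it follow `e a * a⁻¹ = a⁻¹` and
`(a⁻¹)⁻¹ = a`, which turn the single condition `a * b⁻¹ ∈ H` into `e a = a * a⁻¹ ∈ H`,
`a⁻¹ = e a * a⁻¹ ∈ H` and `a * b = a * (b⁻¹)⁻¹ ∈ H`. -/

namespace GenGroup

variable {G : Type*} (GG : GenGroup G)

lemma e_mul_e (a : G) : GG.mul (GG.e a) (GG.e a) = GG.e a := by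
  calc GG.mul (GG.e a) (GG.e a) = GG.mul (GG.mul (GG.e a) a) (GG.inv a) := by
        rw [GG.mul_assoc, GG.mul_inv]
    _ = GG.e a := by rw [GG.e_mul, GG.mul_inv]

lemma e_e (a : G) : GG.e (GG.e a) = GG.e a :=
  (GG.e_unique _ _ (GG.e_mul_e a) (GG.e_mul_e a)).symm

lemma e_inv (a : G) : GG.e (GG.inv a) = GG.e a := by
  have left : GG.mul (GG.e (GG.inv a)) (GG.e a) = GG.e a := by
    rw [← GG.inv_mul a, ← GG.mul_assoc, GG.e_mul]
  have right : GG.mul (GG.e a) (GG.e (GG.inv a)) = GG.e a := by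
    rw [← GG.mul_inv a, GG.mul_assoc, GG.mul_e]
  rw [GG.e_unique _ _ left right, GG.e_e]

lemma e_mul_inv (a : G) : GG.mul (GG.e a) (GG.inv a) = GG.inv a := by
  rw [← GG.e_inv, GG.e_mul]

lemma inv_inv (a : G) : GG.inv (GG.inv a) = a := by
  calc GG.inv (GG.inv a) = GG.mul (GG.mul a (GG.inv a)) (GG.inv (GG.inv a)) := by
        rw [GG.mul_inv, ← GG.e_inv, ← GG.e_inv, GG.e_mul]
    _ = a := by rw [GG.mul_assoc, GG.mul_inv, GG.e_inv, GG.mul_e]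

end GenGroup

theorem genSubgroup_iff_general {G : Type*} (GG : GenGroup G)
    (H : Set G) :
    ((∀ a ∈ H, ∀ b ∈ H, GG.mul a b ∈ H) ∧ (∀ a ∈ H, GG.e a ∈ H) ∧
        (∀ a ∈ H, GG.inv a ∈ H)) ↔
      (∀ a ∈ H, ∀ b ∈ H, GG.mul a (GG.inv b) ∈ H) := by
  refine ⟨fun ⟨hmul, _, hinv⟩ a ha b hb => hmul a ha _ (hinv b hb), fun h => ?_⟩
  have he : ∀ a ∈ H, GG.e a ∈ H := fun a ha => GG.mul_inv a ▸ h a ha a ha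
  have hinv : ∀ a ∈ H, GG.inv a ∈ H := fun a ha =>
    GG.e_mul_inv a ▸ h _ (he a ha) a ha
  refine ⟨fun a ha b hb => ?_, he, hinv⟩
  simpa only [GG.inv_inv] using h a ha _ (hinv b hb)

/-- A nonempty subset `H` of a generalized group is a generalized subgroup
(closed under the operation, and containing the identities and the inverses of
its elements, so that it is itself a generalized group under the restricted
operation) if and only if `a * b⁻¹ ∈ H` for all `a, b ∈ H`. -/
theorem genSubgroup_iff {G : Type*} [Nonempty G] (GG : GenGroup G)
    (H : Set G) (hH : H.Nonempty) :
    ((∀ a ∈ H, ∀ b ∈ H, GG.mul a b ∈ H) ∧ (∀ a ∈ H, GG.e a ∈ H) ∧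
        (∀ a ∈ H, GG.inv a ∈ H)) ↔
      (∀ a ∈ H, ∀ b ∈ H, GG.mul a (GG.inv b) ∈ H) :=
  genSubgroup_iff_general GG H
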